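/- Let $A$ be a commutative ring with $2 \in A^{\times}$ and let $B$ be a commutative $A$-algebra, free of rank 2 as an $A$-module. Then $B$ decomposes as an $A$-module as $B \cong A \oplus M$, where $M = \ker(\frac{1}{2}\mathrm{Tr} : B \to A)$ is a projective $A$-module of rank 1, and for $m, m' \in M$ the product $m m'$ lies in $A \cdot 1 \subset B$. Consequently $B \cong A[z]/(z^2 - s)$ locally, i.e. $B$ is isomorphic as an $A$-algebra to $\mathrm{Sym}^{\bullet}(M)/(m \otimes m' - q(m,m'))$ for the quadratic form $q(m,m') = \frac{1}{2}\mathrm{Tr}(mm')$. -/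

import Mathlib

/-!
Since `Tr(1) = 2` is invertible, `½Tr` is a retraction of the unit map `A → B`, so
`B = A·1 ⊕ M` with `M = ker(½Tr)` a direct summand of a free module, hence projective, of local
rank `2 - 1 = 1`. Cayley–Hamilton in rank 2 gives `x² = Tr(x)·x - N(x)`, so a trace-zero `x`
has `x² = -N(x) ∈ A`, and polarization (using `2 ∈ Aˣ`) gives `m m' ∈ A` for `m, m' ∈ M`.
If `m₀` generates `M`, then `1, m₀` generate `B`, so `A[z]/(z² - s) → B`, `z ↦ m₀`, is a
surjection between free modules of rank 2, hence an isomorphism.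
-/

open Polynomial

variable (A B : Type*) [CommRing A] [CommRing B] [Algebra A B] [Invertible (2 : A)]

noncomputable def halfTrace : B →ₗ[A] A := ⅟(2 : A) • (Algebra.trace A B)

/-- The trace-zero submodule `M = ker((1/2)Tr : B → A)`. -/
noncomputable def traceZero : Submodule A B := LinearMap.ker (halfTrace A B)

theorem Module.nontrivial_of_finrank_ne_one {R M : Type*} [Semiring R] [AddCommMonoid M]
    [Module R M] (h : Module.finrank R M ≠ 1) : Nontrivial R :=
  not_subsingleton_iff_nontrivial.mp fun _ ↦ h Module.finrank_subsingleton

theorem LinearMap.isCompl_range_ker_of_leftInverse {R M N : Type*} [Ring R] [AddCommGroup M]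
    [AddCommGroup N] [Module R M] [Module R N] (f : M →ₗ[R] N) (g : N →ₗ[R] M)
    (h : Function.LeftInverse g f) : IsCompl (range f) (ker g) := by
  have hidem : IsIdempotentElem (f ∘ₗ g) := by ext x; simp [h (g x)]
  have hrange : range (f ∘ₗ g) = range f :=
    range_comp_of_range_eq_top _ (range_eq_top_of_surjective _ h.surjective)
  have hker : ker (f ∘ₗ g) = ker g :=
    ker_comp_of_ker_eq_bot _ (ker_eq_bot_of_injective h.injective)
  exact hrange ▸ hker ▸ LinearMap.IsIdempotentElem.isCompl hidem

section

variable {R S : Type*} [CommRing R] [CommRing S] [Algebra R S]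

theorem Algebra.mul_self_eq_of_finrank_eq_two [Module.Free R S] [Module.Finite R S]
    (h : Module.finrank R S = 2) (x : S) :
    x * x = algebraMap R S (Algebra.trace R S x) * x - algebraMap R S (Algebra.norm R x) := by
  have : Nontrivial R := Module.nontrivial_of_finrank_ne_one (M := S) (by simp [h])
  let b := Module.finBasisOfFinrankEq R S h
  have hCH := Matrix.aeval_self_charpoly (Algebra.leftMulMatrix b x)
  rw [Matrix.charpoly_fin_two] at hCH
  apply Algebra.leftMulMatrix_injective b
  simp only [map_sub, map_mul, AlgHom.commutes, Algebra.trace_eq_matrix_trace b,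
    Algebra.norm_eq_matrix_det b]
  simp only [map_add, map_sub, map_mul, map_pow, aeval_X, aeval_C] at hCH
  rw [← sub_eq_zero, ← hCH, sq]
  abel

theorem exists_mul_eq_algebraMap_of_mul_self [Invertible (2 : R)] (N : Submodule R S)
    (hN : ∀ m ∈ N, ∃ a, m * m = algebraMap R S a) {m m' : S} (hm : m ∈ N) (hm' : m' ∈ N) :
    ∃ a, m * m' = algebraMap R S a := by
  obtain ⟨a, ha⟩ := hN m hm
  obtain ⟨a', ha'⟩ := hN m' hm'
  obtain ⟨c, hc⟩ := hN (m + m') (add_mem hm hm')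
  refine ⟨⅟2 * (c - a - a'), ?_⟩
  have h2 : algebraMap R S ⅟2 * 2 = 1 := by
    rw [← map_ofNat (algebraMap R S), ← map_mul, invOf_mul_self, map_one]
  rw [map_mul, map_sub, map_sub, ← ha, ← ha', ← hc]
  linear_combination (m * m') * h2.symm

theorem AdjoinRoot.nonempty_algEquiv_of_adjoin_eq_top [Module.Free R S] [Module.Finite R S]
    {q : R[X]} (hq : q.Monic) (hdeg : q.natDegree = Module.finrank R S) {x : S}
    (hx : aeval x q = 0) (hadj : Algebra.adjoin R {x} = ⊤) :
    Nonempty (S ≃ₐ[R] AdjoinRoot q) := by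
  have : Nontrivial R := not_subsingleton_iff_nontrivial.mp fun _ ↦ by
    simp [Subsingleton.elim q 0] at hdeg
  let pb := AdjoinRoot.powerBasis' hq
  have : Module.Free R (AdjoinRoot q) := .of_basis pb.basis
  have : Module.Finite R (AdjoinRoot q) := .of_basis pb.basis
  let e : AdjoinRoot q ≃ₗ[R] S := .ofFinrankEq _ _ (pb.finrank.trans hdeg)
  let f := AdjoinRoot.liftAlgHom q (Algebra.ofId R S) x hx
  have hsurj : Function.Surjective f := by
    rw [← AlgHom.range_eq_top, eq_top_iff, ← hadj, Algebra.adjoin_le_iff,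
      Set.singleton_subset_iff]
    exact ⟨AdjoinRoot.root q, AdjoinRoot.liftAlgHom_root ..⟩
  have hinj : Function.Injective f := OrzechProperty.injective_of_surjective_of_injective
    e.toLinearMap f.toLinearMap e.injective hsurj
  exact ⟨(AlgEquiv.ofBijective f ⟨hinj, hsurj⟩).symm⟩

end

section

variable {A B}

theorem halfTrace_apply (x : B) : halfTrace A B x = ⅟2 * Algebra.trace A B x := rfl

theorem trace_eq_zero_of_mem_traceZero {x : B} (hx : x ∈ traceZero A B) :
    Algebra.trace A B x = 0 :=
  (isUnit_of_invertible (⅟2 : A)).mul_right_eq_zero.mp hx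

variable [Module.Free A B]

theorem halfTrace_algebraMap (hrank : Module.finrank A B = 2) (a : A) :
    halfTrace A B (algebraMap A B a) = a := by
  have : Nontrivial A := Module.nontrivial_of_finrank_ne_one (M := B) (by simp [hrank])
  rw [halfTrace_apply, Algebra.trace_algebraMap, hrank, two_nsmul, ← two_mul,
    invOf_mul_cancel_left]

theorem isCompl_range_algebraMap_traceZero (hrank : Module.finrank A B = 2) :
    IsCompl (LinearMap.range (Algebra.linearMap A B)) (traceZero A B) :=
  LinearMap.isCompl_range_ker_of_leftInverse _ _ (halfTrace_algebraMap hrank)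

theorem projective_traceZero (hrank : Module.finrank A B = 2) :
    Module.Projective A (traceZero A B) :=
  .of_split _ _
    (Submodule.projectionOnto_comp_subtype (isCompl_range_algebraMap_traceZero hrank).symm)

theorem finite_traceZero [Module.Finite A B] (hrank : Module.finrank A B = 2) :
    Module.Finite A (traceZero A B) :=
  .of_surjective _ (Submodule.projectionOnto_surjective
    (isCompl_range_algebraMap_traceZero hrank).symm)

theorem rankAtStalk_traceZero [Module.Finite A B] (hrank : Module.finrank A B = 2) :
    Module.rankAtStalk (R := A) (traceZero A B) = 1 := by
  have : Nontrivial A := Module.nontrivial_of_finrank_ne_one (M := B) (by simp [hrank])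
  have := projective_traceZero hrank
  have := finite_traceZero hrank
  have hinj : Function.Injective (algebraMap A B) :=
    Function.LeftInverse.injective (halfTrace_algebraMap hrank)
  let e : (A × traceZero A B) ≃ₗ[A] B :=
    (LinearEquiv.ofInjective (Algebra.linearMap A B) hinj).prodCongr (.refl _ _) ≪≫ₗ
      Submodule.prodEquivOfIsCompl _ _ (isCompl_range_algebraMap_traceZero hrank)
  ext p
  have h := congr_fun (Module.rankAtStalk_eq_of_equiv e) p
  rw [Module.rankAtStalk_prod, Module.rankAtStalk_self,
    Module.rankAtStalk_eq_finrank_of_free (M := B), hrank] at h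
  simp only [Pi.add_apply, Pi.one_apply, Pi.natCast_apply, Nat.cast_ofNat] at h ⊢
  omega

theorem mul_self_eq_of_mem_traceZero [Module.Finite A B] (hrank : Module.finrank A B = 2) {m : B}
    (hm : m ∈ traceZero A B) :
    m * m = algebraMap A B (-Algebra.norm A m) := by
  rw [Algebra.mul_self_eq_of_finrank_eq_two hrank, trace_eq_zero_of_mem_traceZero hm, map_zero,
    zero_mul, zero_sub, map_neg]

theorem adjoin_eq_top_of_span_eq_traceZero (hrank : Module.finrank A B = 2) {x : B}
    (hx : Submodule.span A {x} = traceZero A B) :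
    Algebra.adjoin A {x} = ⊤ := by
  refine eq_top_iff.mpr fun y _ ↦ ?_
  have hy : y ∈ LinearMap.range (Algebra.linearMap A B) ⊔ traceZero A B := by
    rw [(isCompl_range_algebraMap_traceZero hrank).sup_eq_top]; trivial
  obtain ⟨_, ⟨a, rfl⟩, z, hz, rfl⟩ := Submodule.mem_sup.mp hy
  rw [← hx, Submodule.mem_span_singleton] at hz
  obtain ⟨c, rfl⟩ := hz
  exact add_mem (Subalgebra.algebraMap_mem _ a)
    (Subalgebra.smul_mem _ (Algebra.self_mem_adjoin_singleton A x) c)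

end

/-- Let `A` be a commutative ring with `2 ∈ Aˣ` and `B` a commutative `A`-algebra, free
of rank 2 as an `A`-module.  Then `B` decomposes as an `A`-module as `B ≅ A ⊕ M` where
`M = ker((1/2)Tr)`, `M` is a projective `A`-module of rank 1, products of two elements
of `M` lie in `A·1 ⊆ B`, and consequently `B ≅ A[z]/(z² - s)` whenever `M` is free of
rank one: if `m₀` generates `M` then `B ≅ A[z]/(z² - s)` with `s = (1/2)Tr(m₀²)`. -/
theorem rank_two_algebra_decomposition
    [Module.Free A B] [Module.Finite A B] (hrank : Module.finrank A B = 2) :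
    IsCompl (LinearMap.range (Algebra.linearMap A B)) (traceZero A B) ∧
    Module.Projective A (traceZero A B) ∧
    (∀ (P : Ideal A) (_ : P.IsPrime),
      Module.finrank (Localization.AtPrime P)
        (LocalizedModule P.primeCompl (traceZero A B)) = 1) ∧
    (∀ m m' : traceZero A B, ∃ a : A, (m : B) * (m' : B) = algebraMap A B a) ∧
    (∀ m₀ : traceZero A B, Submodule.span A {(m₀ : B)} = traceZero A B →
      Nonempty (B ≃ₐ[A] AdjoinRoot
        (X ^ 2 - C (⅟(2 : A) * Algebra.trace A B ((m₀ : B) * (m₀ : B)))))) := by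
  have hsq : ∀ m ∈ traceZero A B, ∃ a, m * m = algebraMap A B a :=
    fun m hm ↦ ⟨_, mul_self_eq_of_mem_traceZero hrank hm⟩
  refine ⟨isCompl_range_algebraMap_traceZero hrank, projective_traceZero hrank,
    fun P hP ↦ congr_fun (rankAtStalk_traceZero hrank) ⟨P, hP⟩,
    fun m m' ↦ exists_mul_eq_algebraMap_of_mul_self _ hsq m.2 m'.2, fun m₀ hspan ↦ ?_⟩
  have : Nontrivial A := Module.nontrivial_of_finrank_ne_one (M := B) (by simp [hrank])
  obtain ⟨s, hs⟩ := hsq m₀ m₀.2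
  rw [hs, ← halfTrace_apply, halfTrace_algebraMap hrank]
  exact AdjoinRoot.nonempty_algEquiv_of_adjoin_eq_top (monic_X_pow_sub_C s two_ne_zero)
    (by rw [natDegree_X_pow_sub_C, hrank]) (by simp [sq, hs])
    (adjoin_eq_top_of_span_eq_traceZero hrank hspan)
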